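/- Let X be a Tychonoff space. Then the free topological vector space V(X) is a Lindelöf space if and only if the finite power Xⁿ is Lindelöf for every n ∈ ℕ. -/

import Mathlib

/-!
`V` is the union over `n` of the images of `ℝⁿ × Xⁿ` under `(c, x) ↦ ∑ cⱼ • i xⱼ`, because `i X`
spans `V`; each image is Lindelöf when `Xⁿ` is, `ℝⁿ` being σ-compact.

Conversely, let `e : βX → ℝ^C(βX, ℝ)` be the evaluation map. Extending each `f ∘ stoneCechUnit`
gives a continuous linear `φ : V → ℝ^C(βX, ℝ)` with `φ (i x) = e x`, and the `e p` are linearly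
independent. Since binary expansions are unique, `J y = ∑ 2 ^ j • e (y j)` is injective, hence a
closed embedding of the compact space `(βX)ⁿ`; and `J y` lies in the range of `φ`, which is spanned
by `e '' X`, only if every `y j` lies in `X`. Thus `Xⁿ` is homeomorphic to `range φ ∩ range J`, a
closed subset of the Lindelöf set `range φ`.
-/

open Topology Set

universe u v w

/-- `IsFreeTVS V i` says that the (real) topological vector space `V` together with the
continuous map `i : X → V` is the free topological vector space over `X`: every continuous
map from `X` to a topological vector space `E` extends uniquely to a continuous linear
operator `V →L[ℝ] E`. -/
def IsFreeTVS {X : Type u} [TopologicalSpace X] (V : Type v) [AddCommGroup V] [Module ℝ V]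
    [TopologicalSpace V] [IsTopologicalAddGroup V] [ContinuousSMul ℝ V] (i : X → V) : Prop :=
  Continuous i ∧
    ∀ (E : Type w) [AddCommGroup E] [Module ℝ E] [TopologicalSpace E]
      [IsTopologicalAddGroup E] [ContinuousSMul ℝ E] (f : X → E),
      Continuous f → ∃! g : V →L[ℝ] E, ∀ x, g (i x) = f x

/-- `SPn i n` is the set `SP_n(X) = {λ₁x₁ + ⋯ + λₙxₙ : λᵢ ∈ [−n,n], xᵢ ∈ X}` inside `V`. -/
def SPn {X : Type u} {V : Type v} [AddCommGroup V] [Module ℝ V]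
    (i : X → V) (n : ℕ) : Set V :=
  {v | ∃ (c : Fin n → ℝ) (x : Fin n → X),
    (∀ j, c j ∈ Set.Icc (-(n : ℝ)) (n : ℝ)) ∧ v = ∑ j, c j • i (x j)}

theorem IsCompact.prod_isLindelof {X Y : Type*} [TopologicalSpace X] [TopologicalSpace Y]
    {s : Set X} {t : Set Y} (hs : IsCompact s) (ht : IsLindelof t) : IsLindelof (s ×ˢ t) := by
  refine isLindelof_of_countable_subcover fun U hUo hcov => ?_
  have tube : ∀ y ∈ t, ∃ F : Finset _, ∃ W ∈ 𝓝 y, s ×ˢ W ⊆ ⋃ a ∈ F, U a := by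
    intro y hy
    obtain ⟨F, hF⟩ := (hs.prod isCompact_singleton).elim_finite_subcover U hUo
      ((prod_mono subset_rfl (singleton_subset_iff.2 hy)).trans hcov)
    obtain ⟨u, W, -, hWo, hsu, hyW, hsub⟩ := generalized_tube_lemma hs isCompact_singleton
      (isOpen_biUnion fun a _ => hUo a) hF
    exact ⟨F, W, hWo.mem_nhds (hyW rfl), (prod_mono hsu subset_rfl).trans hsub⟩
  choose! F W hW hsW using tube
  obtain ⟨c, hc, hct, htc⟩ := ht.elim_nhds_subcover W hW
  refine ⟨⋃ y ∈ c, F y, hc.biUnion fun y _ => (F y).countable_toSet, fun p hp => ?_⟩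
  obtain ⟨y, hy, hpy⟩ := mem_iUnion₂.1 (htc hp.2)
  obtain ⟨a, ha, hpa⟩ := mem_iUnion₂.1 (hsW y (hct y hy) ⟨hp.1, hpy⟩)
  exact mem_iUnion₂.2 ⟨a, mem_iUnion₂.2 ⟨y, hy, ha⟩, hpa⟩

instance lindelofSpace_prod_of_sigmaCompactSpace {X Y : Type*} [TopologicalSpace X]
    [TopologicalSpace Y] [SigmaCompactSpace X] [LindelofSpace Y] : LindelofSpace (X × Y) := by
  rw [← isLindelof_univ_iff, ← univ_prod_univ, ← iUnion_compactCovering, iUnion_prod_const]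
  exact isLindelof_iUnion fun n => (isCompact_compactCovering X n).prod_isLindelof isLindelof_univ

theorem Fin.sum_two_pow_injective (n : ℕ) :
    Function.Injective fun s : Finset (Fin n) => ∑ j ∈ s, 2 ^ (j : ℕ) := by
  intro s t hst
  apply Finset.map_injective Fin.valEmbedding
  apply Finset.geomSum_injective le_rfl
  simpa only [Finset.sum_map, Fin.valEmbedding_apply] using hst

section

variable {R β E : Type*} [Ring R] [AddCommGroup E] [Module R E]

variable (R) in
noncomputable def twoPowFinsupp {n : ℕ} (y : Fin n → β) : β →₀ R :=
  ∑ j, Finsupp.single (y j) (2 ^ (j : ℕ))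

theorem twoPowFinsupp_apply [DecidableEq β] {n : ℕ} (y : Fin n → β) (p : β) :
    twoPowFinsupp R y p = ((∑ j with y j = p, 2 ^ (j : ℕ) : ℕ) : R) := by
  simp [twoPowFinsupp, Finsupp.finsetSum_apply, Finsupp.single_apply, Finset.sum_ite]

theorem linearCombination_twoPowFinsupp (e : β → E) {n : ℕ} (y : Fin n → β) :
    Finsupp.linearCombination R e (twoPowFinsupp R y) =
      ∑ j : Fin n, (2 : R) ^ (j : ℕ) • e (y j) := by
  simp [twoPowFinsupp, map_sum]

variable [CharZero R]

theorem twoPowFinsupp_injective (n : ℕ) :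
    Function.Injective (twoPowFinsupp R : (Fin n → β) → β →₀ R) := by
  classical
  intro y y' h
  funext k
  have hk := congrArg (· (y k)) h
  simp only [twoPowFinsupp_apply, Nat.cast_inj] at hk
  have hk' : k ∈ ({j | y' j = y k} : Finset (Fin n)) := by
    rw [← Fin.sum_two_pow_injective n hk]; simp
  exact ((Finset.mem_filter.1 hk').2).symm

theorem twoPowFinsupp_apply_ne_zero {n : ℕ} (y : Fin n → β) (j : Fin n) :
    twoPowFinsupp R y (y j) ≠ 0 := by
  classical
  rw [twoPowFinsupp_apply, Nat.cast_ne_zero, ← Nat.pos_iff_ne_zero]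
  exact Finset.sum_pos (fun _ _ => by positivity) ⟨j, by simp⟩

variable {e : β → E}

theorem LinearIndependent.sum_two_pow_smul_injective (he : LinearIndependent R e) (n : ℕ) :
    Function.Injective fun y : Fin n → β => ∑ j : Fin n, (2 : R) ^ (j : ℕ) • e (y j) := by
  intro y y' h
  simp only [← linearCombination_twoPowFinsupp] at h
  exact twoPowFinsupp_injective n (he.finsuppLinearCombination_injective h)

theorem LinearIndependent.mem_of_sum_two_pow_smul_mem_span (he : LinearIndependent R e)
    {S : Set β} {n : ℕ} {y : Fin n → β}
    (hy : ∑ j : Fin n, (2 : R) ^ (j : ℕ) • e (y j) ∈ Submodule.span R (e '' S)) (j : Fin n) :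
    y j ∈ S := by
  obtain ⟨l, hlS, hl⟩ := (Finsupp.mem_span_image_iff_linearCombination R).1 hy
  rw [← linearCombination_twoPowFinsupp] at hl
  rw [he.finsuppLinearCombination_injective hl] at hlS
  exact hlS (Finsupp.mem_support_iff.2 (twoPowFinsupp_apply_ne_zero y j))

end

theorem linearIndependent_continuousMap_eval {K : Type*} [TopologicalSpace K] [T35Space K] :
    LinearIndependent ℝ fun (p : K) (f : C(K, ℝ)) => f p := by
  classical
  rw [linearIndependent_iff']
  intro s c hsum p hp
  obtain ⟨f, hf, hfp, hf1⟩ := CompletelyRegularSpace.completely_regular p _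
    (s.erase p).finite_toSet.isClosed (by simp)
  let g : C(K, ℝ) := ⟨fun q => 1 - f q, continuous_const.sub (continuous_subtype_val.comp hf)⟩
  have hg : ∀ q ∈ s.erase p, c q * g q = 0 := fun q hq => by
    simp [g, hf1 (Finset.mem_coe.2 hq)]
  have := congrFun hsum g
  simp only [Finset.sum_apply, Pi.smul_apply, smul_eq_mul, Pi.zero_apply] at this
  rwa [← Finset.sum_erase_add _ _ hp, Finset.sum_eq_zero hg, zero_add,
    mul_eq_zero_iff_right] at this
  simp [g, hfp]

namespace IsFreeTVS

variable {X : Type u} [TopologicalSpace X] {V : Type v} [AddCommGroup V] [Module ℝ V]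
  [TopologicalSpace V] [IsTopologicalAddGroup V] [ContinuousSMul ℝ V] {i : X → V}

theorem span_range_eq_top (hV : IsFreeTVS.{u, v, w} V i) : Submodule.span ℝ (range i) = ⊤ := by
  by_contra h
  obtain ⟨f, hf0, hfi⟩ := Submodule.exists_le_ker_of_lt_top _ (lt_top_iff_ne_top.2 h)
  -- Every linear map into the indiscrete `ℝ` is continuous, so uniqueness of extensions forces
  -- a functional vanishing on `range i` to be zero.
  let T := (TopModuleCat.indiscrete.{w} ℝ).obj (ModuleCat.of ℝ (ULift.{w} ℝ))
  obtain ⟨g, -, hg⟩ := hV.2 T (fun _ => 0) continuous_const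
  let f' : V →L[ℝ] T := ⟨ULift.moduleEquiv.symm.toLinearMap ∘ₗ f, continuous_top⟩
  have : f' = 0 :=
    (hg f' fun x => congrArg ULift.up (hfi (Submodule.subset_span ⟨x, rfl⟩))).trans
      (hg 0 fun _ => rfl).symm
  exact hf0 (LinearMap.ext fun v => congrArg (fun φ : V →L[ℝ] T => (φ v).down) this)

theorem exists_sum_eq (hV : IsFreeTVS.{u, v, w} V i) (v : V) :
    ∃ (n : ℕ) (c : Fin n → ℝ) (x : Fin n → X), ∑ j, c j • i (x j) = v := by
  have hv : v ∈ Submodule.span ℝ (range i) := hV.span_range_eq_top ▸ Submodule.mem_top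
  obtain ⟨n, c, z, rfl⟩ := Submodule.mem_span_set'.1 hv
  choose x hx using fun j => (z j).2
  exact ⟨n, c, x, by simp only [hx]⟩

theorem exists_continuousLinearMap_pi (hV : IsFreeTVS.{u, v, w} V i) {A : Type*}
    (g : A → X → ℝ) (hg : ∀ a, Continuous (g a)) :
    ∃ φ : V →L[ℝ] (A → ℝ), ∀ x a, φ (i x) a = g a x := by
  have : ∀ a, ∃ L : V →L[ℝ] ℝ, ∀ x, L (i x) = g a x := fun a => by
    obtain ⟨L, hL, -⟩ := hV.2 (ULift.{w} ℝ) (fun x => ULift.up (g a x))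
      (continuous_uliftUp.comp (hg a))
    refine ⟨ContinuousLinearEquiv.ulift.toContinuousLinearMap.comp L, fun x => ?_⟩
    simp only [ContinuousLinearMap.comp_apply, hL]
    rfl
  choose L hL using this
  exact ⟨ContinuousLinearMap.pi L, fun x a => hL a x⟩

theorem lindelofSpace_of_lindelofSpace_pi (hV : IsFreeTVS.{u, v, w} V i)
    (hX : ∀ n, LindelofSpace (Fin n → X)) : LindelofSpace V := by
  have hcover : ⋃ n : ℕ, range (fun p : (Fin n → ℝ) × (Fin n → X) => ∑ j, p.1 j • i (p.2 j)) =
      univ :=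
    eq_univ_of_forall fun v => by
      obtain ⟨n, c, x, rfl⟩ := hV.exists_sum_eq v
      exact mem_iUnion.2 ⟨n, (c, x), rfl⟩
  rw [← isLindelof_univ_iff, ← hcover]
  refine isLindelof_iUnion fun n => ?_
  have := hX n
  have := hV.1
  exact isLindelof_range (by fun_prop)

theorem range_subset_span_range_comp (hV : IsFreeTVS.{u, v, w} V i) {E : Type*} [AddCommGroup E]
    [Module ℝ E] (φ : V →ₗ[ℝ] E) : range φ ⊆ Submodule.span ℝ (range (φ ∘ i)) := by
  rintro _ ⟨v, rfl⟩
  have hv : φ v ∈ (Submodule.span ℝ (range i)).map φ :=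
    Submodule.mem_map_of_mem (hV.span_range_eq_top ▸ Submodule.mem_top)
  rwa [Submodule.map_span, ← range_comp] at hv

theorem lindelofSpace_pi_of_lindelofSpace [T35Space X] (hV : IsFreeTVS.{u, v, w} V i)
    [LindelofSpace V] (n : ℕ) : LindelofSpace (Fin n → X) := by
  let e : StoneCech X → (C(StoneCech X, ℝ) → ℝ) := fun p f => f p
  have he : LinearIndependent ℝ e := linearIndependent_continuousMap_eval
  obtain ⟨φ, hφ⟩ := hV.exists_continuousLinearMap_pi
    (fun (f : C(StoneCech X, ℝ)) x => f (stoneCechUnit x))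
    fun f => f.continuous.comp continuous_stoneCechUnit
  have hφi : ∀ x, φ (i x) = e (stoneCechUnit x) := fun x => funext (hφ x)
  have he_cont : Continuous e := continuous_pi fun f => f.continuous
  let J : (Fin n → StoneCech X) → (C(StoneCech X, ℝ) → ℝ) :=
    fun y => ∑ j : Fin n, (2 : ℝ) ^ (j : ℕ) • e (y j)
  have hJ : IsClosedEmbedding J :=
    Continuous.isClosedEmbedding (by fun_prop) (he.sum_two_pow_smul_injective n)
  let U : (Fin n → X) → (Fin n → StoneCech X) := Pi.map fun _ => stoneCechUnit
  have hU : IsInducing U := .piMap fun _ => isEmbedding_stoneCechUnit.isInducing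
  have hrange : range (J ∘ U) = range φ ∩ range J := by
    refine Subset.antisymm ?_ ?_
    · rintro _ ⟨x, rfl⟩
      refine ⟨⟨∑ j : Fin n, (2 : ℝ) ^ (j : ℕ) • i (x j), ?_⟩, U x, rfl⟩
      simp [J, U, map_sum, map_smul, hφi]
    · rintro _ ⟨hφy, y, rfl⟩
      have hy := hV.range_subset_span_range_comp φ.toLinearMap hφy
      rw [ContinuousLinearMap.coe_coe, show ⇑φ ∘ i = e ∘ stoneCechUnit from funext hφi,
        range_comp] at hy
      rw [range_comp, range_piMap]
      exact mem_image_of_mem J fun j _ => he.mem_of_sum_two_pow_smul_mem_span hy j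
  rw [← isLindelof_univ_iff, (hJ.isInducing.comp hU).isLindelof_iff, image_univ, hrange]
  exact (isLindelof_range φ.continuous).inter_right hJ.isClosed_range

end IsFreeTVS

/-- If `X` is a Tychonoff space and `(V, i)` is the free topological vector
space over `X`, then `V` is Lindelöf if and only if every finite power `Xⁿ` is Lindelöf. -/
theorem lindelof_freeTVS_iff
    {X : Type u} [TopologicalSpace X] [T35Space X]
    (V : Type v) [AddCommGroup V] [Module ℝ V] [TopologicalSpace V]
    [IsTopologicalAddGroup V] [ContinuousSMul ℝ V] (i : X → V)
    (hV : IsFreeTVS V i) :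
    LindelofSpace V ↔ ∀ n : ℕ, LindelofSpace (Fin n → X) :=
  ⟨fun _ => hV.lindelofSpace_pi_of_lindelofSpace, hV.lindelofSpace_of_lindelofSpace_pi⟩
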